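/- arXiv:2304.03175 — 5 statements merged into one kernel-verified Lean document; each statement's English description precedes it below -/
import Mathlib

section
/- (Multiplication, Lemma 3.1 of LDC) In LDC(N≥): if Γ ⊢ a :^q A, then for every r₀ ∈ ℕ, r₀·Γ ⊢ a :^{r₀·q} A. -/
/-!
The simply-typed calculus LDC(N≥): graded by the preordered semiring of natural
numbers with the descending order, i.e. the preorder `q <: q'` holds iff `q' ≤ q`.
-/

namespace LDC

/-- Types of LDC(N≥): `Unit`, graded functions `^r A → B`, graded products
`^r A₁ × A₂` and sums `A₁ + A₂`. -/
inductive Ty : Type where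
  | unit : Ty
  | arr : ℕ → Ty → Ty → Ty
  | prod : ℕ → Ty → Ty → Ty
  | sum : Ty → Ty → Ty

/-- Terms of LDC(N≥), with variables named by natural numbers. -/
inductive Tm : Type where
  /-- variable `x` -/
  | var : ℕ → Tm
  /-- `λ^r x:A. b` -/
  | lam : ℕ → ℕ → Ty → Tm → Tm
  /-- application `b a^r` -/
  | app : Tm → Tm → ℕ → Tm
  /-- `unit` -/
  | unit : Tm
  /-- `let_{q₀} unit be a in b` -/
  | letUnit : ℕ → Tm → Tm → Tm
  /-- `(a₁^r, a₂)` -/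
  | pair : Tm → ℕ → Tm → Tm
  /-- `let_{q₀} (x^r, y) be a in b` -/
  | letPair : ℕ → ℕ → ℕ → ℕ → Tm → Tm → Tm
  /-- `inj₁ a` -/
  | inj1 : Tm → Tm
  /-- `inj₂ a` -/
  | inj2 : Tm → Tm
  /-- `case_{q₀} a of x₁.b₁; x₂.b₂` -/
  | case : ℕ → Tm → ℕ → Tm → ℕ → Tm → Tm

/-- Free variables of a term. -/
def fv : Tm → Finset ℕ
  | .var x => {x}
  | .lam _ x _ b => fv b \ {x}
  | .app b a _ => fv b ∪ fv a
  | .unit => ∅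
  | .letUnit _ a b => fv a ∪ fv b
  | .pair a _ b => fv a ∪ fv b
  | .letPair _ x _ y a b => fv a ∪ (fv b \ {x, y})
  | .inj1 a => fv a
  | .inj2 a => fv a
  | .case _ a x₁ b₁ x₂ b₂ => fv a ∪ (fv b₁ \ {x₁}) ∪ (fv b₂ \ {x₂})

/-- Capture-avoiding substitution `a{c/z}` of `c` for the free occurrences of
`z` in `a` (binders shadowing `z` are left untouched). -/
def subst (z : ℕ) (c : Tm) : Tm → Tm
  | .var x => if x = z then c else .var x
  | .lam r x A b => .lam r x A (if x = z then b else subst z c b)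
  | .app b a r => .app (subst z c b) (subst z c a) r
  | .unit => .unit
  | .letUnit q a b => .letUnit q (subst z c a) (subst z c b)
  | .pair a r b => .pair (subst z c a) r (subst z c b)
  | .letPair q x r y a b =>
      .letPair q x r y (subst z c a) (if x = z ∨ y = z then b else subst z c b)
  | .inj1 a => .inj1 (subst z c a)
  | .inj2 a => .inj2 (subst z c a)
  | .case q a x₁ b₁ x₂ b₂ =>
      .case q (subst z c a) x₁ (if x₁ = z then b₁ else subst z c b₁)
        x₂ (if x₂ = z then b₂ else subst z c b₂)

/-- A context is a list of graded assumptions `x :^q A`. -/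
abbrev Ctx := List (ℕ × ℕ × Ty)

/-- `⌊Γ⌋`: the underlying ungraded context. -/
def floor (Γ : Ctx) : List (ℕ × Ty) := Γ.map (fun e => (e.1, e.2.2))

/-- `Γ₁ + Γ₂`: pointwise addition of grades (meaningful when `⌊Γ₁⌋ = ⌊Γ₂⌋`). -/
def ctxAdd (Γ₁ Γ₂ : Ctx) : Ctx :=
  List.zipWith (fun e₁ e₂ => (e₁.1, e₁.2.1 + e₂.2.1, e₁.2.2)) Γ₁ Γ₂

/-- `q·Γ`: multiply every grade of `Γ` by `q`. -/
def ctxSMul (q : ℕ) (Γ : Ctx) : Ctx := Γ.map (fun e => (e.1, q * e.2.1, e.2.2))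

/-- The preorder `q <: q'` of N≥, i.e. `q' ≤ q` (descending order). -/
def gradeLe (q q' : ℕ) : Prop := q' ≤ q

/-- `Γ <: Γ'`: same underlying assumptions, grades pointwise related by `<:`. -/
def ctxLe (Γ Γ' : Ctx) : Prop :=
  List.Forall₂ (fun e e' => e.1 = e'.1 ∧ e.2.2 = e'.2.2 ∧ gradeLe e.2.1 e'.2.1) Γ Γ'

/-- The typing judgment `Γ ⊢ a :^q A` of LDC(N≥). -/
inductive Typing : Ctx → Tm → ℕ → Ty → Prop where
  | var (Γ₁ Γ₂ : Ctx) (x q : ℕ) (A : Ty) :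
      Typing (ctxSMul 0 Γ₁ ++ [(x, q, A)] ++ ctxSMul 0 Γ₂) (.var x) q A
  | lam {Γ : Ctx} {b : Tm} {q : ℕ} {B : Ty} (r x : ℕ) (A : Ty) :
      Typing (Γ ++ [(x, q * r, A)]) b q B →
      Typing Γ (.lam r x A b) q (.arr r A B)
  | app {Γ₁ Γ₂ : Ctx} {b a : Tm} {q r : ℕ} {A B : Ty} :
      Typing Γ₁ b q (.arr r A B) →
      Typing Γ₂ a (q * r) A →
      floor Γ₁ = floor Γ₂ →
      Typing (ctxAdd Γ₁ Γ₂) (.app b a r) q B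
  | unit (Γ : Ctx) (q : ℕ) : Typing (ctxSMul 0 Γ) .unit q .unit
  | letUnit {Γ₁ Γ₂ : Ctx} {a b : Tm} {q q₀ : ℕ} {B : Ty} :
      Typing Γ₁ a (q * q₀) .unit →
      Typing Γ₂ b q B →
      gradeLe q₀ 1 →
      floor Γ₁ = floor Γ₂ →
      Typing (ctxAdd Γ₁ Γ₂) (.letUnit q₀ a b) q B
  | pair {Γ₁ Γ₂ : Ctx} {a₁ a₂ : Tm} {q r : ℕ} {A₁ A₂ : Ty} :
      Typing Γ₁ a₁ (q * r) A₁ →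
      Typing Γ₂ a₂ q A₂ →
      floor Γ₁ = floor Γ₂ →
      Typing (ctxAdd Γ₁ Γ₂) (.pair a₁ r a₂) q (.prod r A₁ A₂)
  | letPair {Γ₁ Γ₂ : Ctx} {a b : Tm} {q q₀ r x y : ℕ} {A₁ A₂ B : Ty} :
      Typing Γ₁ a (q * q₀) (.prod r A₁ A₂) →
      Typing (Γ₂ ++ [(x, q * q₀ * r, A₁), (y, q * q₀, A₂)]) b q B →
      gradeLe q₀ 1 →
      floor Γ₁ = floor Γ₂ →
      Typing (ctxAdd Γ₁ Γ₂) (.letPair q₀ x r y a b) q B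
  | inj1 {Γ : Ctx} {a₁ : Tm} {q : ℕ} {A₁ : Ty} (A₂ : Ty) :
      Typing Γ a₁ q A₁ → Typing Γ (.inj1 a₁) q (.sum A₁ A₂)
  | inj2 {Γ : Ctx} {a₂ : Tm} {q : ℕ} {A₂ : Ty} (A₁ : Ty) :
      Typing Γ a₂ q A₂ → Typing Γ (.inj2 a₂) q (.sum A₁ A₂)
  | case {Γ₁ Γ₂ : Ctx} {a b₁ b₂ : Tm} {q q₀ x₁ x₂ : ℕ} {A₁ A₂ B : Ty} :
      Typing Γ₁ a (q * q₀) (.sum A₁ A₂) →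
      Typing (Γ₂ ++ [(x₁, q * q₀, A₁)]) b₁ q B →
      Typing (Γ₂ ++ [(x₂, q * q₀, A₂)]) b₂ q B →
      gradeLe q₀ 1 →
      floor Γ₁ = floor Γ₂ →
      Typing (ctxAdd Γ₁ Γ₂) (.case q₀ a x₁ b₁ x₂ b₂) q B
  | subL {Γ Γ' : Ctx} {a : Tm} {q : ℕ} {A : Ty} :
      Typing Γ' a q A → ctxLe Γ Γ' → Typing Γ a q A
  | subR {Γ : Ctx} {a : Tm} {q q' : ℕ} {A : Ty} :
      Typing Γ a q A → gradeLe q q' → Typing Γ a q' A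

/-- Values: λ-abstractions, `unit`, pairs and injections. -/
def IsValue : Tm → Prop
  | .lam _ _ _ _ => True
  | .unit => True
  | .pair _ _ _ => True
  | .inj1 _ => True
  | .inj2 _ => True
  | _ => False

/-- Call-by-name small-step reduction `⊢ a ⇝ a'`. -/
inductive Step : Tm → Tm → Prop where
  | appBeta (r x : ℕ) (A : Ty) (b a : Tm) :
      Step (.app (.lam r x A b) a r) (subst x a b)
  | letUnitBeta (q₀ : ℕ) (b : Tm) :
      Step (.letUnit q₀ .unit b) b
  | letPairBeta (q₀ x r y : ℕ) (a₁ a₂ b : Tm) :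
      Step (.letPair q₀ x r y (.pair a₁ r a₂) b) (subst y a₂ (subst x a₁ b))
  | caseBeta1 (q₀ : ℕ) (a₁ : Tm) (x₁ : ℕ) (b₁ : Tm) (x₂ : ℕ) (b₂ : Tm) :
      Step (.case q₀ (.inj1 a₁) x₁ b₁ x₂ b₂) (subst x₁ a₁ b₁)
  | caseBeta2 (q₀ : ℕ) (a₂ : Tm) (x₁ : ℕ) (b₁ : Tm) (x₂ : ℕ) (b₂ : Tm) :
      Step (.case q₀ (.inj2 a₂) x₁ b₁ x₂ b₂) (subst x₂ a₂ b₂)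
  | appCong {b b' : Tm} (a : Tm) (r : ℕ) :
      Step b b' → Step (.app b a r) (.app b' a r)
  | letUnitCong {a a' : Tm} (q₀ : ℕ) (b : Tm) :
      Step a a' → Step (.letUnit q₀ a b) (.letUnit q₀ a' b)
  | letPairCong {a a' : Tm} (q₀ x r y : ℕ) (b : Tm) :
      Step a a' → Step (.letPair q₀ x r y a b) (.letPair q₀ x r y a' b)
  | caseCong {a a' : Tm} (q₀ x₁ : ℕ) (b₁ : Tm) (x₂ : ℕ) (b₂ : Tm) :
      Step a a' → Step (.case q₀ a x₁ b₁ x₂ b₂) (.case q₀ a' x₁ b₁ x₂ b₂)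

/-- A heap is a list of weighted bindings `x ↦^q a`. -/
abbrev Heap := List (ℕ × ℕ × Tm)

/-- The set of variables bound in a heap. -/
def heapDom (H : Heap) : Finset ℕ := (H.map Prod.fst).toFinset

/-- The heap reduction judgment `[H] a ⟹^q_S [H'] a'` of LDC(N≥). -/
inductive HeapStep : Heap → Tm → ℕ → Finset ℕ → Heap → Tm → Prop where
  | var {H₁ H₂ : Heap} {x r q : ℕ} {a : Tm} {S : Finset ℕ} :
      q ≠ 0 →
      HeapStep (H₁ ++ [(x, r + q, a)] ++ H₂) (.var x) q S (H₁ ++ [(x, r, a)] ++ H₂) a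
  | discard {H H' : Heap} {a a' : Tm} {q q' : ℕ} {S : Finset ℕ} :
      HeapStep H a q S H' a' → gradeLe q q' → HeapStep H a q' S H' a'
  | appCong {H H' : Heap} {b b' : Tm} {q : ℕ} {S : Finset ℕ} (a : Tm) (r : ℕ) :
      HeapStep H b q (S ∪ fv a) H' b' →
      HeapStep H (.app b a r) q S H' (.app b' a r)
  | letUnitCong {H H' : Heap} {a a' : Tm} {q : ℕ} {S : Finset ℕ} (q₀ : ℕ) (b : Tm) :
      HeapStep H a q (S ∪ fv b) H' a' →
      HeapStep H (.letUnit q₀ a b) q S H' (.letUnit q₀ a' b)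
  | letPairCong {H H' : Heap} {a a' : Tm} {q : ℕ} {S : Finset ℕ} (q₀ x r y : ℕ) (b : Tm) :
      HeapStep H a q (S ∪ fv b) H' a' →
      HeapStep H (.letPair q₀ x r y a b) q S H' (.letPair q₀ x r y a' b)
  | caseCong {H H' : Heap} {a a' : Tm} {q : ℕ} {S : Finset ℕ} (q₀ x₁ : ℕ) (b₁ : Tm) (x₂ : ℕ) (b₂ : Tm) :
      HeapStep H a q (S ∪ fv b₁ ∪ fv b₂) H' a' →
      HeapStep H (.case q₀ a x₁ b₁ x₂ b₂) q S H' (.case q₀ a' x₁ b₁ x₂ b₂)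
  | appBeta {H : Heap} {S : Finset ℕ} (r x : ℕ) (A : Ty) (b a : Tm) (q : ℕ) {x' : ℕ} :
      x' ∉ S → x' ∉ heapDom H →
      HeapStep H (.app (.lam r x A b) a r) q S
        (H ++ [(x', q * r, a)]) (subst x (.var x') b)
  | letUnitBeta {H : Heap} {S : Finset ℕ} (q₀ : ℕ) (b : Tm) (q : ℕ) :
      HeapStep H (.letUnit q₀ .unit b) q S H b
  | letPairBeta {H : Heap} {S : Finset ℕ} (q₀ x r y : ℕ) (a₁ a₂ b : Tm) (q : ℕ) {x' y' : ℕ} :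
      x' ∉ S → x' ∉ heapDom H → y' ∉ S → y' ∉ heapDom H → x' ≠ y' →
      HeapStep H (.letPair q₀ x r y (.pair a₁ r a₂) b) q S
        (H ++ [(x', q * q₀ * r, a₁), (y', q * q₀, a₂)])
        (subst y (.var y') (subst x (.var x') b))
  | caseBeta1 {H : Heap} {S : Finset ℕ} (q₀ : ℕ) (a₁ : Tm) (x₁ : ℕ) (b₁ : Tm) (x₂ : ℕ) (b₂ : Tm) (q : ℕ) {x' : ℕ} :
      x' ∉ S → x' ∉ heapDom H →
      HeapStep H (.case q₀ (.inj1 a₁) x₁ b₁ x₂ b₂) q S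
        (H ++ [(x', q * q₀, a₁)]) (subst x₁ (.var x') b₁)
  | caseBeta2 {H : Heap} {S : Finset ℕ} (q₀ : ℕ) (a₂ : Tm) (x₁ : ℕ) (b₁ : Tm) (x₂ : ℕ) (b₂ : Tm) (q : ℕ) {x' : ℕ} :
      x' ∉ S → x' ∉ heapDom H →
      HeapStep H (.case q₀ (.inj2 a₂) x₁ b₁ x₂ b₂) q S
        (H ++ [(x', q * q₀, a₂)]) (subst x₂ (.var x') b₂)

/-- The compatibility judgment `H ⊨ Γ` between heaps and contexts. -/
inductive Compat : Heap → Ctx → Prop where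
  | nil : Compat [] []
  | cons {H : Heap} {Γ Γ₀ : Ctx} {x q : ℕ} {a : Tm} {A : Ty} :
      floor Γ₀ = floor Γ →
      Typing Γ₀ a q A →
      Compat H (ctxAdd Γ Γ₀) →
      Compat (H ++ [(x, q, a)]) (Γ ++ [(x, q, A)])

/-- `n` successive heap reduction steps at grade `q`, where at each step the
support set is the domain of the current heap together with the free
variables of the current term. -/
inductive HeapSteps : Heap → Tm → ℕ → ℕ → Heap → Tm → Prop where
  | refl (H : Heap) (a : Tm) (q : ℕ) : HeapSteps H a q 0 H a
  | step {H H' H'' : Heap} {a a' a'' : Tm} {q n : ℕ} :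
      HeapStep H a q (heapDom H ∪ fv a) H' a' →
      HeapSteps H' a' q n H'' a'' →
      HeapSteps H a q (n + 1) H'' a''

/-!
Induction on the derivation. Every rule is homogeneous in the grades: scaling the grades of
the conclusion by `r₀` scales those of each premise, since `r₀·(Γ₁ + Γ₂) = r₀·Γ₁ + r₀·Γ₂`,
`r₀·(q·r) = (r₀·q)·r` and `r₀·(0·Γ) = 0·Γ`, while multiplication by `r₀` is monotone, so the
subsumption rules survive.
-/

@[simp]
lemma ctxSMul_nil (r : ℕ) : ctxSMul r [] = [] := rfl

@[simp]
lemma ctxSMul_cons (r x q : ℕ) (A : Ty) (Γ : Ctx) :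
    ctxSMul r ((x, q, A) :: Γ) = (x, r * q, A) :: ctxSMul r Γ := rfl

@[simp]
lemma ctxSMul_append (r : ℕ) (Γ₁ Γ₂ : Ctx) :
    ctxSMul r (Γ₁ ++ Γ₂) = ctxSMul r Γ₁ ++ ctxSMul r Γ₂ :=
  List.map_append

@[simp]
lemma ctxSMul_ctxSMul (r s : ℕ) (Γ : Ctx) : ctxSMul r (ctxSMul s Γ) = ctxSMul (r * s) Γ := by
  simp only [ctxSMul, List.map_map, Function.comp_def, Nat.mul_assoc]

lemma ctxSMul_ctxAdd (r : ℕ) (Γ₁ Γ₂ : Ctx) :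
    ctxSMul r (ctxAdd Γ₁ Γ₂) = ctxAdd (ctxSMul r Γ₁) (ctxSMul r Γ₂) := by
  simp only [ctxSMul, ctxAdd, List.map_zipWith, List.zipWith_map, Nat.mul_add]

@[simp]
lemma floor_ctxSMul (r : ℕ) (Γ : Ctx) : floor (ctxSMul r Γ) = floor Γ := by
  simp only [floor, ctxSMul, List.map_map, Function.comp_def]

lemma ctxLe.ctxSMul {Γ Γ' : Ctx} (r : ℕ) (h : ctxLe Γ Γ') :
    ctxLe (ctxSMul r Γ) (ctxSMul r Γ') :=
  List.forall₂_map_left_iff.2 <| List.forall₂_map_right_iff.2 <|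
    h.imp fun _ _ ⟨hx, hA, hq⟩ => ⟨hx, hA, Nat.mul_le_mul_left r hq⟩

end LDC

/-- **Multiplication (Lemma 3.1 of LDC).** In LDC(N≥): if `Γ ⊢ a :^q A`, then
for every `r₀ ∈ ℕ`, `r₀·Γ ⊢ a :^{r₀·q} A`. -/
theorem LDC.multiplication {Γ : LDC.Ctx} {a : LDC.Tm} {q : ℕ} {A : LDC.Ty}
    (h : LDC.Typing Γ a q A) (r₀ : ℕ) :
    LDC.Typing (LDC.ctxSMul r₀ Γ) a (r₀ * q) A := by
  induction h with
  | var Γ₁ Γ₂ x q A => simpa using Typing.var Γ₁ Γ₂ x (r₀ * q) A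
  | unit Γ q => simpa using Typing.unit Γ (r₀ * q)
  | lam r x A _ ih => exact .lam r x A (by simpa [Nat.mul_assoc] using ih)
  | app _ _ hfl ihb iha =>
    rw [ctxSMul_ctxAdd]
    exact .app ihb (by rwa [Nat.mul_assoc]) (by simp only [floor_ctxSMul, hfl])
  | letUnit _ _ hq₀ hfl iha ihb =>
    rw [ctxSMul_ctxAdd]
    exact .letUnit (by rwa [Nat.mul_assoc]) ihb hq₀ (by simp only [floor_ctxSMul, hfl])
  | pair _ _ hfl ih₁ ih₂ =>
    rw [ctxSMul_ctxAdd]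
    exact .pair (by rwa [Nat.mul_assoc]) ih₂ (by simp only [floor_ctxSMul, hfl])
  | letPair _ _ hq₀ hfl iha ihb =>
    rw [ctxSMul_ctxAdd]
    exact .letPair (by rwa [Nat.mul_assoc]) (by simpa [Nat.mul_assoc] using ihb) hq₀
      (by simp only [floor_ctxSMul, hfl])
  | case _ _ _ hq₀ hfl iha ih₁ ih₂ =>
    rw [ctxSMul_ctxAdd]
    exact .case (by rwa [Nat.mul_assoc]) (by simpa [Nat.mul_assoc] using ih₁)
      (by simpa [Nat.mul_assoc] using ih₂) hq₀ (by simp only [floor_ctxSMul, hfl])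
  | inj1 A₂ _ ih => exact .inj1 A₂ ih
  | inj2 A₁ _ ih => exact .inj2 A₁ ih
  | subL _ hle ih => exact .subL ih (hle.ctxSMul r₀)
  | subR _ hle ih => exact .subR ih (Nat.mul_le_mul_left r₀ hle)
end

section
/- (Splitting, Lemma 3.3 of LDC) In LDC(N≥): if Γ ⊢ a :^{q₁+q₂} A, then there exist contexts Γ₁ and Γ₂ such that Γ₁ ⊢ a :^{q₁} A, Γ₂ ⊢ a :^{q₂} A, and Γ = Γ₁ + Γ₂. -/
namespace LDC

/-! ### Auxiliary context algebra -/

/-- Pointwise maximum of the grades of two contexts (names and types taken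
from the first context). -/
def ctxMax (Γ₁ Γ₂ : Ctx) : Ctx :=
  List.zipWith (fun e₁ e₂ => (e₁.1, max e₁.2.1 e₂.2.1, e₁.2.2)) Γ₁ Γ₂

lemma floor_append (Γ Γ' : Ctx) : floor (Γ ++ Γ') = floor Γ ++ floor Γ' := by
  simp [floor]

@[simp] lemma floor_smul (q : ℕ) (Γ : Ctx) : floor (ctxSMul q Γ) = floor Γ := by
  simp [floor, ctxSMul]

lemma smul_append (q : ℕ) (Γ Γ' : Ctx) :
    ctxSMul q (Γ ++ Γ') = ctxSMul q Γ ++ ctxSMul q Γ' := by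
  simp [ctxSMul]

lemma smul_smul (q q' : ℕ) (Γ : Ctx) :
    ctxSMul q (ctxSMul q' Γ) = ctxSMul (q * q') Γ := by
  simp [ctxSMul, Function.comp, mul_assoc]

lemma smul_add (q : ℕ) (Γ₁ Γ₂ : Ctx) :
    ctxSMul q (ctxAdd Γ₁ Γ₂) = ctxAdd (ctxSMul q Γ₁) (ctxSMul q Γ₂) := by
  induction Γ₁ generalizing Γ₂ with
  | nil => simp [ctxSMul, ctxAdd]
  | cons e Γ ih =>
    cases Γ₂ with
    | nil => simp [ctxSMul, ctxAdd]
    | cons e' Γ' => simp [ctxSMul, ctxAdd, Nat.mul_add] at ih ⊢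

lemma floor_add (Γ₁ Γ₂ : Ctx) (h : Γ₁.length = Γ₂.length) :
    floor (ctxAdd Γ₁ Γ₂) = floor Γ₁ := by
  induction Γ₁ generalizing Γ₂ with
  | nil => simp [ctxAdd, floor]
  | cons e Γ ih =>
    cases Γ₂ with
    | nil => simp at h
    | cons e' Γ' =>
      simp only [List.length_cons, Nat.succ_inj] at h
      simp [ctxAdd, floor] at ih ⊢
      exact ih Γ' h

lemma length_eq_of_floor_eq {Γ₁ Γ₂ : Ctx} (h : floor Γ₁ = floor Γ₂) :
    Γ₁.length = Γ₂.length := by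
  have := congrArg List.length h
  simpa [floor] using this

lemma ctxLe_refl (Γ : Ctx) : ctxLe Γ Γ := by
  induction Γ with
  | nil => exact List.Forall₂.nil
  | cons e Γ ih => exact List.Forall₂.cons ⟨rfl, rfl, le_refl _⟩ ih

lemma ctxLe_trans {Γ₁ Γ₂ Γ₃ : Ctx} (h₁ : ctxLe Γ₁ Γ₂) (h₂ : ctxLe Γ₂ Γ₃) :
    ctxLe Γ₁ Γ₃ := by
  induction h₁ generalizing Γ₃ with
  | nil => cases h₂; exact List.Forall₂.nil
  | cons he _ ih =>
    cases h₂ with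
    | cons he' ht' =>
      exact List.Forall₂.cons
        ⟨he.1.trans he'.1, he.2.1.trans he'.2.1, le_trans he'.2.2 he.2.2⟩ (ih ht')

lemma ctxLe_floor_eq {Γ Γ' : Ctx} (h : ctxLe Γ Γ') : floor Γ = floor Γ' := by
  induction h with
  | nil => rfl
  | cons he _ ih => simp only [floor, List.map_cons] at ih ⊢; rw [he.1, he.2.1, ih]

lemma ctxLe_append {Γ₁ Γ₂ Γ₁' Γ₂' : Ctx} (h₁ : ctxLe Γ₁ Γ₁') (h₂ : ctxLe Γ₂ Γ₂') :
    ctxLe (Γ₁ ++ Γ₂) (Γ₁' ++ Γ₂') := by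
  induction h₁ with
  | nil => exact h₂
  | cons he _ ih => exact List.Forall₂.cons he ih

lemma ctxLe_snoc_inv {Γ Γ' : Ctx} {e e' : ℕ × ℕ × Ty}
    (h : ctxLe (Γ ++ [e]) (Γ' ++ [e'])) :
    ctxLe Γ Γ' ∧ e.1 = e'.1 ∧ e.2.2 = e'.2.2 ∧ e'.2.1 ≤ e.2.1 := by
  induction Γ generalizing Γ' with
  | nil =>
    cases Γ' with
    | nil => cases h with | cons he ht => exact ⟨List.Forall₂.nil, he⟩
    | cons f Γ' =>
      cases h with | cons _ ht =>
      have := List.Forall₂.length_eq ht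
      simp at this
  | cons f Γ ih =>
    cases Γ' with
    | nil =>
      cases h with | cons _ ht =>
      have := List.Forall₂.length_eq ht
      simp at this
    | cons f' Γ' =>
      cases h with | cons he ht =>
      obtain ⟨h1, h2⟩ := ih ht
      exact ⟨List.Forall₂.cons he h1, h2⟩

lemma ctxLe_add {Γ₁ Γ₂ Δ₁ Δ₂ : Ctx} (h₁ : ctxLe Γ₁ Δ₁) (h₂ : ctxLe Γ₂ Δ₂) :
    ctxLe (ctxAdd Γ₁ Γ₂) (ctxAdd Δ₁ Δ₂) := by
  induction h₁ generalizing Γ₂ Δ₂ with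
  | nil => cases h₂ <;> exact List.Forall₂.nil
  | cons he _ ih =>
    cases h₂ with
    | nil => exact List.Forall₂.nil
    | cons he' ht' =>
      exact List.Forall₂.cons ⟨he.1, he.2.1, Nat.add_le_add he.2.2 he'.2.2⟩ (ih ht')

lemma ctxLe_smul_mono {q' q : ℕ} (h : q' ≤ q) (Δ : Ctx) :
    ctxLe (ctxSMul q Δ) (ctxSMul q' Δ) := by
  induction Δ with
  | nil => exact List.Forall₂.nil
  | cons e Γ ih =>
    exact List.Forall₂.cons ⟨rfl, rfl, Nat.mul_le_mul_right _ h⟩ ih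

lemma ctxLe_smul_of_le {q' q : ℕ} {Γ : Ctx} {Δ : Ctx} (hq : q' ≤ q)
    (h : ctxLe Γ (ctxSMul q Δ)) : ctxLe Γ (ctxSMul q' Δ) :=
  ctxLe_trans h (ctxLe_smul_mono hq Δ)

lemma smul_zero_eq_of_floor_eq {Γ Γ' : Ctx} (h : floor Γ = floor Γ') :
    ctxSMul 0 Γ = ctxSMul 0 Γ' := by
  induction Γ generalizing Γ' with
  | nil => cases Γ' with
    | nil => rfl
    | cons e' Γ' => simp [floor] at h
  | cons e Γ ih =>
    cases Γ' with
    | nil => simp [floor] at h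
    | cons e' Γ' =>
      simp only [floor, List.map_cons, List.cons.injEq, Prod.mk.injEq] at h
      simp only [ctxSMul, List.map_cons, List.cons.injEq]
      refine ⟨?_, ih h.2⟩
      simp [Prod.ext_iff, h.1.1, h.1.2]

lemma add_smul_zero_self (Γ : Ctx) : ctxAdd Γ (ctxSMul 0 Γ) = Γ := by
  induction Γ with
  | nil => rfl
  | cons e Γ ih => simp [ctxAdd, ctxSMul] at ih ⊢; exact ih

lemma snoc_of_floor {Δ' : Ctx} {L : List (ℕ × Ty)} {x : ℕ} {A : Ty}
    (h : floor Δ' = L ++ [(x, A)]) :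
    ∃ (Δ : Ctx) (s : ℕ), Δ' = Δ ++ [(x, s, A)] ∧ floor Δ = L := by
  induction Δ' generalizing L with
  | nil => simp [floor] at h
  | cons e Δ' ih =>
    obtain ⟨n, g, T⟩ := e
    cases L with
    | nil =>
      cases Δ' with
      | nil =>
        simp only [floor, List.map_cons, List.map_nil, List.nil_append,
          List.cons.injEq, Prod.mk.injEq, and_true] at h
        exact ⟨[], g, by simp [h.1, h.2], rfl⟩
      | cons f Δ' =>
        have := congrArg List.length h
        simp [floor] at this
    | cons l L =>
      obtain ⟨m, B⟩ := l
      simp only [floor, List.map_cons, List.cons_append, List.cons.injEq,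
        Prod.mk.injEq] at h
      obtain ⟨Δ, s, h1, h2⟩ := ih (L := L) h.2
      exact ⟨(n, g, T) :: Δ, s, by simp [h1], by
        simp only [floor, List.map_cons, List.cons.injEq, Prod.mk.injEq]
        exact ⟨⟨h.1.1, h.1.2⟩, h2⟩⟩

lemma floor_max (Γ₁ Γ₂ : Ctx) (h : Γ₁.length = Γ₂.length) :
    floor (ctxMax Γ₁ Γ₂) = floor Γ₁ := by
  induction Γ₁ generalizing Γ₂ with
  | nil => simp [ctxMax, floor]
  | cons e Γ ih =>
    cases Γ₂ with
    | nil => simp at h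
    | cons e' Γ' =>
      simp only [List.length_cons, Nat.succ_inj] at h
      simp [ctxMax, floor] at ih ⊢
      exact ih Γ' h

lemma ctxLe_smul_max_left (q : ℕ) (Δ₂ Δ₃ : Ctx) (h : Δ₂.length = Δ₃.length) :
    ctxLe (ctxSMul q (ctxMax Δ₂ Δ₃)) (ctxSMul q Δ₂) := by
  induction Δ₂ generalizing Δ₃ with
  | nil => exact List.Forall₂.nil
  | cons e Γ ih =>
    cases Δ₃ with
    | nil => simp at h
    | cons e' Γ' =>
      simp only [List.length_cons, Nat.succ_inj] at h
      exact List.Forall₂.cons ⟨rfl, rfl, Nat.mul_le_mul_left _ (le_max_left _ _)⟩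
        (ih Γ' h)

lemma ctxLe_smul_max_right (q : ℕ) {Δ₂ Δ₃ : Ctx} (h : floor Δ₂ = floor Δ₃) :
    ctxLe (ctxSMul q (ctxMax Δ₂ Δ₃)) (ctxSMul q Δ₃) := by
  induction Δ₂ generalizing Δ₃ with
  | nil => cases Δ₃ with
    | nil => exact List.Forall₂.nil
    | cons _ _ => simp [floor] at h
  | cons e Γ ih =>
    cases Δ₃ with
    | nil => simp [floor] at h
    | cons e' Γ' =>
      simp only [floor, List.map_cons, List.cons.injEq, Prod.mk.injEq] at h
      exact List.Forall₂.cons ⟨h.1.1, h.1.2, Nat.mul_le_mul_left _ (le_max_right _ _)⟩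
        (ih h.2)

lemma ctxLe_max_of {Γ Δ₂ Δ₃ : Ctx} {q : ℕ}
    (h₂ : ctxLe Γ (ctxSMul q Δ₂)) (h₃ : ctxLe Γ (ctxSMul q Δ₃)) :
    ctxLe Γ (ctxSMul q (ctxMax Δ₂ Δ₃)) := by
  induction Γ generalizing Δ₂ Δ₃ with
  | nil =>
    cases Δ₂ with
    | nil => exact List.Forall₂.nil
    | cons _ _ => exact absurd (List.Forall₂.length_eq h₂) (by simp [ctxSMul])
  | cons e Γ ih =>
    cases Δ₂ with
    | nil => exact absurd (List.Forall₂.length_eq h₂) (by simp [ctxSMul])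
    | cons d₂ Δ₂ =>
      cases Δ₃ with
      | nil => exact absurd (List.Forall₂.length_eq h₃) (by simp [ctxSMul])
      | cons d₃ Δ₃ =>
        simp only [ctxSMul, List.map_cons] at h₂ h₃
        cases h₂ with | cons he₂ ht₂ =>
        cases h₃ with | cons he₃ ht₃ =>
        simp only [ctxSMul, ctxMax, List.zipWith_cons_cons, List.map_cons]
        refine List.Forall₂.cons ⟨he₂.1, he₂.2.1, ?_⟩ (ih ht₂ ht₃)
        show q * max d₂.2.1 d₃.2.1 ≤ e.2.1
        rw [← Nat.mul_max_mul_left]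
        exact max_le he₂.2.2 he₃.2.2

lemma smul_singleton (q x g : ℕ) (A : Ty) :
    ctxSMul q [(x, g, A)] = [(x, q * g, A)] := rfl

lemma smul_pair (q x g y g' : ℕ) (A B : Ty) :
    ctxSMul q [(x, g, A), (y, g', B)] = [(x, q * g, A), (y, q * g', B)] := rfl

/-- Zeroing: a typable term is typable at grade `0` in the zeroed context. -/
lemma typing_zero {Γ : Ctx} {a : Tm} {q : ℕ} {A : Ty} (h : Typing Γ a q A) :
    Typing (ctxSMul 0 Γ) a 0 A := by
  induction h with
  | var Γ₁ Γ₂ x q A =>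
    have e : ctxSMul 0 (ctxSMul 0 Γ₁ ++ [(x, q, A)] ++ ctxSMul 0 Γ₂)
        = ctxSMul 0 Γ₁ ++ [(x, 0, A)] ++ ctxSMul 0 Γ₂ := by
      simp [ctxSMul, Function.comp_def]
    rw [e]
    exact Typing.var Γ₁ Γ₂ x 0 A
  | lam r x A hb ih =>
    refine Typing.lam r x A ?_
    rw [smul_append, smul_singleton] at ih
    simpa using ih
  | app hb ha hf ihb iha =>
    rw [smul_add]
    refine Typing.app ihb ?_ (by simp [hf])
    simpa using iha
  | unit Γ q =>
    rw [smul_smul]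
    exact Typing.unit Γ 0
  | letUnit ha hb hq₀ hf iha ihb =>
    rw [smul_add]
    refine Typing.letUnit ?_ ihb hq₀ (by simp [hf])
    simpa using iha
  | pair ha₁ ha₂ hf ih₁ ih₂ =>
    rw [smul_add]
    refine Typing.pair ?_ ih₂ (by simp [hf])
    simpa using ih₁
  | letPair ha hb hq₀ hf iha ihb =>
    rename_i Γ₁ Γ₂ a' b' q' q₀ r x y A₁ A₂ B
    rw [smul_add]
    rw [smul_append, smul_pair] at ihb
    refine Typing.letPair (A₁ := A₁) (A₂ := A₂) ?_ ?_ hq₀ (by simp [hf])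
    · simpa using iha
    · simpa using ihb
  | inj1 A₂ ha ih => exact Typing.inj1 A₂ ih
  | inj2 A₁ ha ih => exact Typing.inj2 A₁ ih
  | case ha hb₁ hb₂ hq₀ hf iha ihb₁ ihb₂ =>
    rename_i Γ₁ Γ₂ a' b₁ b₂ q' q₀ x₁ x₂ A₁ A₂ B
    rw [smul_add]
    rw [smul_append, smul_singleton] at ihb₁ ihb₂
    refine Typing.case (A₁ := A₁) (A₂ := A₂) ?_ ?_ ?_ hq₀ (by simp [hf])
    · simpa using iha
    · simpa using ihb₁
    · simpa using ihb₂
  | subL ht hle ih =>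
    rwa [smul_zero_eq_of_floor_eq (ctxLe_floor_eq hle)]
  | subR ht hle ih => exact ih

lemma ctxLe_zero (Γ : Ctx) : ctxLe Γ (ctxSMul 0 Γ) := by
  induction Γ with
  | nil => exact List.Forall₂.nil
  | cons e Γ ih =>
    refine List.Forall₂.cons ⟨rfl, rfl, ?_⟩ ih
    show 0 * e.2.1 ≤ e.2.1
    omega

lemma floor_singleton (x g : ℕ) (A : Ty) : floor [(x, g, A)] = [(x, A)] := rfl

/-- Linearization: a term typable at a nonzero grade admits a "per-unit"
context `Δ` with `q·Δ <:` the original context, from which the term can be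
typed at every grade. -/
lemma typing_linear {Γ : Ctx} {a : Tm} {q : ℕ} {A : Ty} (h : Typing Γ a q A) :
    q ≠ 0 → ∃ Δ : Ctx, ctxLe Γ (ctxSMul q Δ) ∧
      ∀ q', Typing (ctxSMul q' Δ) a q' A := by
  induction h with
  | var Γ₁ Γ₂ x q A =>
    intro _
    have key : ∀ q', ctxSMul q' (ctxSMul 0 Γ₁ ++ [(x, 1, A)] ++ ctxSMul 0 Γ₂)
        = ctxSMul 0 Γ₁ ++ [(x, q', A)] ++ ctxSMul 0 Γ₂ := by
      intro q'; simp [ctxSMul, Function.comp_def]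
    exact ⟨_, by rw [key q]; exact ctxLe_refl _,
      fun q' => by rw [key q']; exact Typing.var Γ₁ Γ₂ x q' A⟩
  | lam r x A hb ih =>
    rename_i Γ' b q B
    intro hq
    obtain ⟨Δ', hle, htyp⟩ := ih hq
    have hfl : floor Δ' = floor Γ' ++ [(x, A)] := by
      have := ctxLe_floor_eq hle
      rw [floor_smul] at this
      rw [← this, floor_append, floor_singleton]
    obtain ⟨Δ, s, rfl, hfΔ⟩ := snoc_of_floor hfl
    rw [smul_append, smul_singleton] at hle
    obtain ⟨hleΓ, -, -, hs⟩ := ctxLe_snoc_inv hle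
    have hsr : s ≤ r := Nat.le_of_mul_le_mul_left hs (Nat.pos_of_ne_zero hq)
    refine ⟨Δ, hleΓ, fun q' => ?_⟩
    refine Typing.lam r x A (Typing.subL (htyp q') ?_)
    rw [smul_append, smul_singleton]
    exact ctxLe_append (ctxLe_refl _)
      (List.Forall₂.cons ⟨rfl, rfl, Nat.mul_le_mul_left _ hsr⟩ List.Forall₂.nil)
  | app hb ha hf ihb iha =>
    rename_i Γ₁ Γ₂ b a' q r A' B
    intro hq
    obtain ⟨Δ₁, hle₁, htyp₁⟩ := ihb hq
    have h₂ : ∃ Δ₂ : Ctx, floor Δ₂ = floor Γ₂ ∧ ctxLe Γ₂ (ctxSMul (q * r) Δ₂) ∧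
        ∀ q', Typing (ctxSMul (q' * r) Δ₂) a' (q' * r) A' := by
      rcases Nat.eq_zero_or_pos r with hr | hr
      · subst hr
        refine ⟨ctxSMul 0 Γ₂, by rw [floor_smul], ?_, fun q' => ?_⟩
        · rw [Nat.mul_zero, smul_smul, Nat.mul_zero]
          exact ctxLe_zero Γ₂
        · rw [Nat.mul_zero, smul_smul, Nat.mul_zero]
          exact typing_zero ha
      · obtain ⟨Δ₂, hle₂, htyp₂⟩ := iha (Nat.mul_ne_zero hq hr.ne')
        have : floor Δ₂ = floor Γ₂ := by
          have := ctxLe_floor_eq hle₂; rw [floor_smul] at this; exact this.symm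
        exact ⟨Δ₂, this, hle₂, fun q' => htyp₂ (q' * r)⟩
    obtain ⟨Δ₂, hfΔ₂, hle₂, htyp₂⟩ := h₂
    have hfΔ₁ : floor Δ₁ = floor Γ₁ := by
      have := ctxLe_floor_eq hle₁; rw [floor_smul] at this; exact this.symm
    have key : ∀ q', ctxSMul q' (ctxAdd Δ₁ (ctxSMul r Δ₂))
        = ctxAdd (ctxSMul q' Δ₁) (ctxSMul (q' * r) Δ₂) := by
      intro q'; rw [smul_add, smul_smul]
    refine ⟨ctxAdd Δ₁ (ctxSMul r Δ₂), ?_, fun q' => ?_⟩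
    · rw [key q]; exact ctxLe_add hle₁ hle₂
    · rw [key q']
      exact Typing.app (htyp₁ q') (htyp₂ q') (by rw [floor_smul, floor_smul, hfΔ₁, hfΔ₂, hf])
  | unit Γ' q =>
    intro _
    have key : ∀ q', ctxSMul q' (ctxSMul 0 Γ') = ctxSMul 0 Γ' := by
      intro q'; rw [smul_smul, Nat.mul_zero]
    exact ⟨ctxSMul 0 Γ', by rw [key q]; exact ctxLe_refl _,
      fun q' => by rw [key q']; exact Typing.unit Γ' q'⟩
  | letUnit ha hb hq₀ hf iha ihb =>
    rename_i Γ₁ Γ₂ a' b q q₀ B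
    intro hq
    have hq₀' : q₀ ≠ 0 := by have : (1 : ℕ) ≤ q₀ := hq₀; omega
    obtain ⟨Δ₁, hle₁, htyp₁⟩ := iha (Nat.mul_ne_zero hq hq₀')
    obtain ⟨Δ₂, hle₂, htyp₂⟩ := ihb hq
    have hfΔ₁ : floor Δ₁ = floor Γ₁ := by
      have := ctxLe_floor_eq hle₁; rw [floor_smul] at this; exact this.symm
    have hfΔ₂ : floor Δ₂ = floor Γ₂ := by
      have := ctxLe_floor_eq hle₂; rw [floor_smul] at this; exact this.symm
    have key : ∀ q', ctxSMul q' (ctxAdd (ctxSMul q₀ Δ₁) Δ₂)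
        = ctxAdd (ctxSMul (q' * q₀) Δ₁) (ctxSMul q' Δ₂) := by
      intro q'; rw [smul_add, smul_smul]
    refine ⟨ctxAdd (ctxSMul q₀ Δ₁) Δ₂, ?_, fun q' => ?_⟩
    · rw [key q]; exact ctxLe_add hle₁ hle₂
    · rw [key q']
      exact Typing.letUnit (htyp₁ (q' * q₀)) (htyp₂ q') hq₀
        (by rw [floor_smul, floor_smul, hfΔ₁, hfΔ₂, hf])
  | pair ha₁ ha₂ hf ih₁ ih₂ =>
    rename_i Γ₁ Γ₂ a₁ a₂ q r A₁ A₂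
    intro hq
    obtain ⟨Δ₂, hle₂, htyp₂⟩ := ih₂ hq
    have h₁ : ∃ Δ₁ : Ctx, floor Δ₁ = floor Γ₁ ∧ ctxLe Γ₁ (ctxSMul (q * r) Δ₁) ∧
        ∀ q', Typing (ctxSMul (q' * r) Δ₁) a₁ (q' * r) A₁ := by
      rcases Nat.eq_zero_or_pos r with hr | hr
      · subst hr
        refine ⟨ctxSMul 0 Γ₁, by rw [floor_smul], ?_, fun q' => ?_⟩
        · rw [Nat.mul_zero, smul_smul, Nat.mul_zero]
          exact ctxLe_zero Γ₁
        · rw [Nat.mul_zero, smul_smul, Nat.mul_zero]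
          exact typing_zero ha₁
      · obtain ⟨Δ₁, hle₁, htyp₁⟩ := ih₁ (Nat.mul_ne_zero hq hr.ne')
        have : floor Δ₁ = floor Γ₁ := by
          have := ctxLe_floor_eq hle₁; rw [floor_smul] at this; exact this.symm
        exact ⟨Δ₁, this, hle₁, fun q' => htyp₁ (q' * r)⟩
    obtain ⟨Δ₁, hfΔ₁, hle₁, htyp₁⟩ := h₁
    have hfΔ₂ : floor Δ₂ = floor Γ₂ := by
      have := ctxLe_floor_eq hle₂; rw [floor_smul] at this; exact this.symm
    have key : ∀ q', ctxSMul q' (ctxAdd (ctxSMul r Δ₁) Δ₂)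
        = ctxAdd (ctxSMul (q' * r) Δ₁) (ctxSMul q' Δ₂) := by
      intro q'; rw [smul_add, smul_smul]
    refine ⟨ctxAdd (ctxSMul r Δ₁) Δ₂, ?_, fun q' => ?_⟩
    · rw [key q]; exact ctxLe_add hle₁ hle₂
    · rw [key q']
      exact Typing.pair (htyp₁ q') (htyp₂ q')
        (by rw [floor_smul, floor_smul, hfΔ₁, hfΔ₂, hf])
  | letPair ha hb hq₀ hf iha ihb =>
    rename_i Γ₁ Γ₂ a' b q q₀ r x y A₁ A₂ B
    intro hq
    have hq₀' : q₀ ≠ 0 := by have : (1 : ℕ) ≤ q₀ := hq₀; omega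
    obtain ⟨Δ₁, hle₁, htyp₁⟩ := iha (Nat.mul_ne_zero hq hq₀')
    obtain ⟨Δ', hle', htyp'⟩ := ihb hq
    have hfl : floor Δ' = (floor Γ₂ ++ [(x, A₁)]) ++ [(y, A₂)] := by
      have := ctxLe_floor_eq hle'
      rw [floor_smul] at this
      rw [← this, floor_append]
      simp [floor]
    obtain ⟨Δ'', t, rfl, hfΔ''⟩ := snoc_of_floor hfl
    obtain ⟨Δ₂, s, rfl, hfΔ₂⟩ := snoc_of_floor hfΔ''
    have eΔ : ∀ q', ctxSMul q' ((Δ₂ ++ [(x, s, A₁)]) ++ [(y, t, A₂)])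
        = (ctxSMul q' Δ₂ ++ [(x, q' * s, A₁)]) ++ [(y, q' * t, A₂)] := by
      intro q'; rw [smul_append, smul_append, smul_singleton, smul_singleton]
    have eΓ : Γ₂ ++ [(x, q * q₀ * r, A₁), (y, q * q₀, A₂)]
        = (Γ₂ ++ [(x, q * q₀ * r, A₁)]) ++ [(y, q * q₀, A₂)] := by
      rw [List.append_assoc]; rfl
    rw [eΔ q, eΓ] at hle'
    obtain ⟨hle'', -, -, ht⟩ := ctxLe_snoc_inv hle'
    obtain ⟨hleΓ₂, -, -, hs⟩ := ctxLe_snoc_inv hle''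
    have hspos := Nat.pos_of_ne_zero hq
    have hs' : s ≤ q₀ * r :=
      Nat.le_of_mul_le_mul_left (by rw [← Nat.mul_assoc]; exact hs) hspos
    have ht' : t ≤ q₀ := Nat.le_of_mul_le_mul_left ht hspos
    have hfΔ₁ : floor Δ₁ = floor Γ₁ := by
      have := ctxLe_floor_eq hle₁; rw [floor_smul] at this; exact this.symm
    have key : ∀ q', ctxSMul q' (ctxAdd (ctxSMul q₀ Δ₁) Δ₂)
        = ctxAdd (ctxSMul (q' * q₀) Δ₁) (ctxSMul q' Δ₂) := by
      intro q'; rw [smul_add, smul_smul]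
    refine ⟨ctxAdd (ctxSMul q₀ Δ₁) Δ₂, ?_, fun q' => ?_⟩
    · rw [key q]; exact ctxLe_add hle₁ hleΓ₂
    · rw [key q']
      refine Typing.letPair (htyp₁ (q' * q₀)) (Typing.subL (htyp' q') ?_) hq₀
        (by rw [floor_smul, floor_smul, hfΔ₁, hfΔ₂, hf])
      rw [eΔ q']
      have e2 : ctxSMul q' Δ₂ ++ [(x, q' * q₀ * r, A₁), (y, q' * q₀, A₂)]
          = (ctxSMul q' Δ₂ ++ [(x, q' * q₀ * r, A₁)]) ++ [(y, q' * q₀, A₂)] := by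
        rw [List.append_assoc]; rfl
      rw [e2]
      refine ctxLe_append (ctxLe_append (ctxLe_refl _) ?_) ?_
      · refine List.Forall₂.cons ⟨rfl, rfl, ?_⟩ List.Forall₂.nil
        show q' * s ≤ q' * q₀ * r
        rw [Nat.mul_assoc]
        exact Nat.mul_le_mul_left _ hs'
      · exact List.Forall₂.cons ⟨rfl, rfl, Nat.mul_le_mul_left _ ht'⟩
          List.Forall₂.nil
  | inj1 A₂ ha ih =>
    intro hq
    obtain ⟨Δ, hle, htyp⟩ := ih hq
    exact ⟨Δ, hle, fun q' => Typing.inj1 A₂ (htyp q')⟩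
  | inj2 A₁ ha ih =>
    intro hq
    obtain ⟨Δ, hle, htyp⟩ := ih hq
    exact ⟨Δ, hle, fun q' => Typing.inj2 A₁ (htyp q')⟩
  | case ha hb₁ hb₂ hq₀ hf iha ihb₁ ihb₂ =>
    rename_i Γ₁ Γ₂ a' b₁ b₂ q q₀ x₁ x₂ A₁ A₂ B
    intro hq
    have hq₀' : q₀ ≠ 0 := by have : (1 : ℕ) ≤ q₀ := hq₀; omega
    obtain ⟨Δ₁, hle₁, htyp₁⟩ := iha (Nat.mul_ne_zero hq hq₀')
    obtain ⟨Δ₂', hle₂, htyp₂⟩ := ihb₁ hq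
    obtain ⟨Δ₃', hle₃, htyp₃⟩ := ihb₂ hq
    have hfl₂ : floor Δ₂' = floor Γ₂ ++ [(x₁, A₁)] := by
      have := ctxLe_floor_eq hle₂
      rw [floor_smul] at this
      rw [← this, floor_append, floor_singleton]
    have hfl₃ : floor Δ₃' = floor Γ₂ ++ [(x₂, A₂)] := by
      have := ctxLe_floor_eq hle₃
      rw [floor_smul] at this
      rw [← this, floor_append, floor_singleton]
    obtain ⟨Δ₂, s₁, rfl, hfΔ₂⟩ := snoc_of_floor hfl₂
    obtain ⟨Δ₃, s₂, rfl, hfΔ₃⟩ := snoc_of_floor hfl₃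
    rw [smul_append, smul_singleton] at hle₂ hle₃
    obtain ⟨hleΓ₂, -, -, hs₁⟩ := ctxLe_snoc_inv hle₂
    obtain ⟨hleΓ₃, -, -, hs₂⟩ := ctxLe_snoc_inv hle₃
    have hspos := Nat.pos_of_ne_zero hq
    have hs₁' : s₁ ≤ q₀ :=
      Nat.le_of_mul_le_mul_left hs₁ hspos
    have hs₂' : s₂ ≤ q₀ :=
      Nat.le_of_mul_le_mul_left hs₂ hspos
    have hfΔ₁ : floor Δ₁ = floor Γ₁ := by
      have := ctxLe_floor_eq hle₁; rw [floor_smul] at this; exact this.symm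
    have hf23 : floor Δ₂ = floor Δ₃ := by rw [hfΔ₂, hfΔ₃]
    have hlen : Δ₂.length = Δ₃.length := length_eq_of_floor_eq hf23
    have hfm : floor (ctxMax Δ₂ Δ₃) = floor Γ₂ := by
      rw [floor_max _ _ hlen, hfΔ₂]
    have key : ∀ q', ctxSMul q' (ctxAdd (ctxSMul q₀ Δ₁) (ctxMax Δ₂ Δ₃))
        = ctxAdd (ctxSMul (q' * q₀) Δ₁) (ctxSMul q' (ctxMax Δ₂ Δ₃)) := by
      intro q'; rw [smul_add, smul_smul]
    refine ⟨ctxAdd (ctxSMul q₀ Δ₁) (ctxMax Δ₂ Δ₃), ?_, fun q' => ?_⟩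
    · rw [key q]; exact ctxLe_add hle₁ (ctxLe_max_of hleΓ₂ hleΓ₃)
    · rw [key q']
      refine Typing.case (htyp₁ (q' * q₀))
        (Typing.subL (htyp₂ q') ?_) (Typing.subL (htyp₃ q') ?_) hq₀
        (by rw [floor_smul, floor_smul, hfΔ₁, hfm, hf])
      · rw [smul_append, smul_singleton]
        refine ctxLe_append (ctxLe_smul_max_left _ _ _ hlen)
          (List.Forall₂.cons ⟨rfl, rfl, Nat.mul_le_mul_left _ hs₁'⟩
            List.Forall₂.nil)
      · rw [smul_append, smul_singleton]
        refine ctxLe_append (ctxLe_smul_max_right _ hf23)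
          (List.Forall₂.cons ⟨rfl, rfl, Nat.mul_le_mul_left _ hs₂'⟩
            List.Forall₂.nil)
  | subL ht hle ih =>
    intro hq
    obtain ⟨Δ, hle', htyp⟩ := ih hq
    exact ⟨Δ, ctxLe_trans hle hle', htyp⟩
  | subR ht hle ih =>
    rename_i Γ' a' qq qq' A'
    intro hq'
    have hqq : qq ≠ 0 := by
      have : qq' ≤ qq := hle
      omega
    obtain ⟨Δ, hleΔ, htyp⟩ := ih hqq
    exact ⟨Δ, ctxLe_smul_of_le hle hleΔ, htyp⟩

/-- The final arithmetic step of splitting: peel `q₁·Δ` off a context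
dominating `(q₁+q₂)·Δ`. -/
lemma split_ctx (q₁ q₂ : ℕ) : ∀ (Δ Γ : Ctx), ctxLe Γ (ctxSMul (q₁ + q₂) Δ) →
    ∃ Γ₂ : Ctx, ctxLe Γ₂ (ctxSMul q₂ Δ) ∧ Γ = ctxAdd (ctxSMul q₁ Δ) Γ₂ := by
  intro Δ
  induction Δ with
  | nil =>
    intro Γ h
    cases h
    exact ⟨[], List.Forall₂.nil, rfl⟩
  | cons d Δ ih =>
    intro Γ h
    cases Γ with
    | nil => exact absurd (List.Forall₂.length_eq h) (by simp [ctxSMul])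
    | cons g Γ =>
      simp only [ctxSMul, List.map_cons] at h
      cases h with
      | cons he ht =>
        obtain ⟨Γ₂, h1, h2⟩ := ih Γ ht
        have hge : (q₁ + q₂) * d.2.1 ≤ g.2.1 := he.2.2
        refine ⟨(d.1, g.2.1 - q₁ * d.2.1, d.2.2) :: Γ₂, ?_, ?_⟩
        · refine List.Forall₂.cons ⟨rfl, rfl, ?_⟩ h1
          show q₂ * d.2.1 ≤ g.2.1 - q₁ * d.2.1
          have : q₁ * d.2.1 + q₂ * d.2.1 ≤ g.2.1 := by
            rw [← Nat.add_mul]; exact hge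
          omega
        · simp only [ctxSMul, ctxAdd, List.map_cons, List.zipWith_cons_cons]
          refine congrArg₂ _ ?_ h2
          obtain ⟨gn, gg, gT⟩ := g
          obtain ⟨dn, dg, dT⟩ := d
          obtain ⟨e1, e2, -⟩ := he
          simp only at e1 e2 hge ⊢
          have : q₁ * dg + q₂ * dg ≤ gg := by rw [← Nat.add_mul]; exact hge
          refine Prod.ext e1 (Prod.ext ?_ e2)
          simp only
          omega

end LDC

/-- **Splitting (Lemma 3.3 of LDC).** In LDC(N≥): if `Γ ⊢ a :^{q₁+q₂} A`, then
there exist contexts `Γ₁` and `Γ₂` such that `Γ₁ ⊢ a :^{q₁} A`,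
`Γ₂ ⊢ a :^{q₂} A`, and `Γ = Γ₁ + Γ₂`. -/
theorem LDC.splitting {Γ : LDC.Ctx} {a : LDC.Tm} {q₁ q₂ : ℕ} {A : LDC.Ty}
    (h : LDC.Typing Γ a (q₁ + q₂) A) :
    ∃ Γ₁ Γ₂ : LDC.Ctx, LDC.Typing Γ₁ a q₁ A ∧ LDC.Typing Γ₂ a q₂ A ∧
      Γ = LDC.ctxAdd Γ₁ Γ₂ := by
  rcases Nat.eq_zero_or_pos (q₁ + q₂) with h0 | hpos
  · have hq₁ : q₁ = 0 := by omega
    have hq₂ : q₂ = 0 := by omega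
    subst hq₁; subst hq₂
    exact ⟨Γ, LDC.ctxSMul 0 Γ, h, LDC.typing_zero h,
      (LDC.add_smul_zero_self Γ).symm⟩
  · obtain ⟨Δ, hle, htyp⟩ := LDC.typing_linear h (by omega)
    obtain ⟨Γ₂, hle₂, heq⟩ := LDC.split_ctx q₁ q₂ Δ Γ hle
    exact ⟨LDC.ctxSMul q₁ Δ, Γ₂, htyp q₁, LDC.Typing.subL (htyp q₂) hle₂, heq⟩
end

section
/- (Multiplication, Lemma 3.6 of LDC) In LDC(𝓛) for an arbitrary lattice 𝓛 with ⊤ and ⊥: if Γ ⊢ a :^ℓ A, then for every m₀ ∈ L, m₀ ⊔ Γ ⊢ a :^{m₀ ⊔ ℓ} A. -/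
/-!
The simply-typed calculus LDC(𝓛): graded by an arbitrary lattice
`𝓛 = (L, ⊓, ⊔, ⊤, ⊥, ⊑)` with greatest element `⊤` and least element `⊥`.
-/

namespace LDCL

/-- Types of LDC(𝓛): `Unit`, labelled functions `^m A → B`, labelled products
`^m A₁ × A₂` and sums `A₁ + A₂`, with labels drawn from `L`. -/
inductive Ty (L : Type) : Type where
  | unit : Ty L
  | arr : L → Ty L → Ty L → Ty L
  | prod : L → Ty L → Ty L → Ty L
  | sum : Ty L → Ty L → Ty L

/-- Terms of LDC(𝓛), with variables named by natural numbers. -/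
inductive Tm (L : Type) : Type where
  /-- variable `x` -/
  | var : ℕ → Tm L
  /-- `λ^m x:A. b` -/
  | lam : L → ℕ → Ty L → Tm L → Tm L
  /-- application `b a^m` -/
  | app : Tm L → Tm L → L → Tm L
  /-- `unit` -/
  | unit : Tm L
  /-- `let unit be a in b` -/
  | letUnit : Tm L → Tm L → Tm L
  /-- `(a₁^m, a₂)` -/
  | pair : Tm L → L → Tm L → Tm L
  /-- `let (x^m, y) be a in b` -/
  | letPair : ℕ → L → ℕ → Tm L → Tm L → Tm L
  /-- `inj₁ a` -/
  | inj1 : Tm L → Tm L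
  /-- `inj₂ a` -/
  | inj2 : Tm L → Tm L
  /-- `case a of x₁.b₁; x₂.b₂` -/
  | case : Tm L → ℕ → Tm L → ℕ → Tm L → Tm L

variable {L : Type}

/-- Free variables of a term. -/
def fv : Tm L → Finset ℕ
  | .var x => {x}
  | .lam _ x _ b => fv b \ {x}
  | .app b a _ => fv b ∪ fv a
  | .unit => ∅
  | .letUnit a b => fv a ∪ fv b
  | .pair a _ b => fv a ∪ fv b
  | .letPair x _ y a b => fv a ∪ (fv b \ {x, y})
  | .inj1 a => fv a
  | .inj2 a => fv a
  | .case a x₁ b₁ x₂ b₂ => fv a ∪ (fv b₁ \ {x₁}) ∪ (fv b₂ \ {x₂})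

/-- Capture-avoiding substitution `a{c/z}` of `c` for the free occurrences of
`z` in `a` (binders shadowing `z` are left untouched). -/
def subst (z : ℕ) (c : Tm L) : Tm L → Tm L
  | .var x => if x = z then c else .var x
  | .lam m x A b => .lam m x A (if x = z then b else subst z c b)
  | .app b a m => .app (subst z c b) (subst z c a) m
  | .unit => .unit
  | .letUnit a b => .letUnit (subst z c a) (subst z c b)
  | .pair a m b => .pair (subst z c a) m (subst z c b)
  | .letPair x m y a b =>
      .letPair x m y (subst z c a) (if x = z ∨ y = z then b else subst z c b)
  | .inj1 a => .inj1 (subst z c a)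
  | .inj2 a => .inj2 (subst z c a)
  | .case a x₁ b₁ x₂ b₂ =>
      .case (subst z c a) x₁ (if x₁ = z then b₁ else subst z c b₁)
        x₂ (if x₂ = z then b₂ else subst z c b₂)

/-- A context is a list of labelled assumptions `x :^ℓ A`. -/
abbrev Ctx (L : Type) := List (ℕ × L × Ty L)

/-- `⌊Γ⌋`: the underlying unlabelled context. -/
def floor (Γ : Ctx L) : List (ℕ × Ty L) := Γ.map (fun e => (e.1, e.2.2))

variable [Lattice L] [BoundedOrder L]

/-- `Γ₁ ⊓ Γ₂`: pointwise meet of labels (meaningful when `⌊Γ₁⌋ = ⌊Γ₂⌋`). -/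
def ctxMeet (Γ₁ Γ₂ : Ctx L) : Ctx L :=
  List.zipWith (fun e₁ e₂ => (e₁.1, e₁.2.1 ⊓ e₂.2.1, e₁.2.2)) Γ₁ Γ₂

/-- `ℓ ⊔ Γ`: join `ℓ` onto every label of `Γ`. -/
def ctxJoin (ℓ : L) (Γ : Ctx L) : Ctx L := Γ.map (fun e => (e.1, ℓ ⊔ e.2.1, e.2.2))

/-- `Γ ⊑ Γ'`: same underlying assumptions, labels pointwise related by `⊑`. -/
def ctxLe (Γ Γ' : Ctx L) : Prop :=
  List.Forall₂ (fun e e' => e.1 = e'.1 ∧ e.2.2 = e'.2.2 ∧ e.2.1 ≤ e'.2.1) Γ Γ'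

/-- The typing judgment `Γ ⊢ a :^ℓ A` of LDC(𝓛). -/
inductive Typing : Ctx L → Tm L → L → Ty L → Prop where
  | var (Γ₁ Γ₂ : Ctx L) (x : ℕ) (ℓ : L) (A : Ty L) :
      Typing (ctxJoin ⊤ Γ₁ ++ [(x, ℓ, A)] ++ ctxJoin ⊤ Γ₂) (.var x) ℓ A
  | lam {Γ : Ctx L} {b : Tm L} {ℓ : L} {B : Ty L} (m : L) (x : ℕ) (A : Ty L) :
      Typing (Γ ++ [(x, ℓ ⊔ m, A)]) b ℓ B →
      Typing Γ (.lam m x A b) ℓ (.arr m A B)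
  | app {Γ₁ Γ₂ : Ctx L} {b a : Tm L} {ℓ m : L} {A B : Ty L} :
      Typing Γ₁ b ℓ (.arr m A B) →
      Typing Γ₂ a (ℓ ⊔ m) A →
      floor Γ₁ = floor Γ₂ →
      Typing (ctxMeet Γ₁ Γ₂) (.app b a m) ℓ B
  | unit (Γ : Ctx L) (ℓ : L) : Typing (ctxJoin ⊤ Γ) .unit ℓ .unit
  | letUnit {Γ₁ Γ₂ : Ctx L} {a b : Tm L} {ℓ : L} {B : Ty L} :
      Typing Γ₁ a ℓ .unit →
      Typing Γ₂ b ℓ B →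
      floor Γ₁ = floor Γ₂ →
      Typing (ctxMeet Γ₁ Γ₂) (.letUnit a b) ℓ B
  | pair {Γ₁ Γ₂ : Ctx L} {a₁ a₂ : Tm L} {ℓ m : L} {A₁ A₂ : Ty L} :
      Typing Γ₁ a₁ (ℓ ⊔ m) A₁ →
      Typing Γ₂ a₂ ℓ A₂ →
      floor Γ₁ = floor Γ₂ →
      Typing (ctxMeet Γ₁ Γ₂) (.pair a₁ m a₂) ℓ (.prod m A₁ A₂)
  | letPair {Γ₁ Γ₂ : Ctx L} {a b : Tm L} {ℓ m : L} {x y : ℕ} {A₁ A₂ B : Ty L} :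
      Typing Γ₁ a ℓ (.prod m A₁ A₂) →
      Typing (Γ₂ ++ [(x, ℓ ⊔ m, A₁), (y, ℓ, A₂)]) b ℓ B →
      floor Γ₁ = floor Γ₂ →
      Typing (ctxMeet Γ₁ Γ₂) (.letPair x m y a b) ℓ B
  | inj1 {Γ : Ctx L} {a₁ : Tm L} {ℓ : L} {A₁ : Ty L} (A₂ : Ty L) :
      Typing Γ a₁ ℓ A₁ → Typing Γ (.inj1 a₁) ℓ (.sum A₁ A₂)
  | inj2 {Γ : Ctx L} {a₂ : Tm L} {ℓ : L} {A₂ : Ty L} (A₁ : Ty L) :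
      Typing Γ a₂ ℓ A₂ → Typing Γ (.inj2 a₂) ℓ (.sum A₁ A₂)
  | case {Γ₁ Γ₂ : Ctx L} {a b₁ b₂ : Tm L} {ℓ : L} {x₁ x₂ : ℕ} {A₁ A₂ B : Ty L} :
      Typing Γ₁ a ℓ (.sum A₁ A₂) →
      Typing (Γ₂ ++ [(x₁, ℓ, A₁)]) b₁ ℓ B →
      Typing (Γ₂ ++ [(x₂, ℓ, A₂)]) b₂ ℓ B →
      floor Γ₁ = floor Γ₂ →
      Typing (ctxMeet Γ₁ Γ₂) (.case a x₁ b₁ x₂ b₂) ℓ B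
  | subL {Γ Γ' : Ctx L} {a : Tm L} {ℓ : L} {A : Ty L} :
      Typing Γ' a ℓ A → ctxLe Γ Γ' → Typing Γ a ℓ A
  | subR {Γ : Ctx L} {a : Tm L} {ℓ ℓ' : L} {A : Ty L} :
      Typing Γ a ℓ A → ℓ ≤ ℓ' → Typing Γ a ℓ' A

/-- Values: λ-abstractions, `unit`, pairs and injections. -/
def IsValue : Tm L → Prop
  | .lam _ _ _ _ => True
  | .unit => True
  | .pair _ _ _ => True
  | .inj1 _ => True
  | .inj2 _ => True
  | _ => False

/-- Call-by-name small-step reduction `⊢ a ⇝ a'`. -/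
inductive Step : Tm L → Tm L → Prop where
  | appBeta (m : L) (x : ℕ) (A : Ty L) (b a : Tm L) :
      Step (.app (.lam m x A b) a m) (subst x a b)
  | letUnitBeta (b : Tm L) :
      Step (.letUnit .unit b) b
  | letPairBeta (x : ℕ) (m : L) (y : ℕ) (a₁ a₂ b : Tm L) :
      Step (.letPair x m y (.pair a₁ m a₂) b) (subst y a₂ (subst x a₁ b))
  | caseBeta1 (a₁ : Tm L) (x₁ : ℕ) (b₁ : Tm L) (x₂ : ℕ) (b₂ : Tm L) :
      Step (.case (.inj1 a₁) x₁ b₁ x₂ b₂) (subst x₁ a₁ b₁)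
  | caseBeta2 (a₂ : Tm L) (x₁ : ℕ) (b₁ : Tm L) (x₂ : ℕ) (b₂ : Tm L) :
      Step (.case (.inj2 a₂) x₁ b₁ x₂ b₂) (subst x₂ a₂ b₂)
  | appCong {b b' : Tm L} (a : Tm L) (m : L) :
      Step b b' → Step (.app b a m) (.app b' a m)
  | letUnitCong {a a' : Tm L} (b : Tm L) :
      Step a a' → Step (.letUnit a b) (.letUnit a' b)
  | letPairCong {a a' : Tm L} (x : ℕ) (m : L) (y : ℕ) (b : Tm L) :
      Step a a' → Step (.letPair x m y a b) (.letPair x m y a' b)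
  | caseCong {a a' : Tm L} (x₁ : ℕ) (b₁ : Tm L) (x₂ : ℕ) (b₂ : Tm L) :
      Step a a' → Step (.case a x₁ b₁ x₂ b₂) (.case a' x₁ b₁ x₂ b₂)

/-- A heap is a list of weighted bindings `x ↦^ℓ a`. -/
abbrev Heap (L : Type) := List (ℕ × L × Tm L)

/-- The set of variables bound in a heap. -/
def heapDom (H : Heap L) : Finset ℕ := (H.map Prod.fst).toFinset

/-- The heap reduction judgment `[H] a ⟹^ℓ_S [H'] a'` of LDC(𝓛). -/
inductive HeapStep : Heap L → Tm L → L → Finset ℕ → Heap L → Tm L → Prop where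
  | var {H₁ H₂ : Heap L} {x : ℕ} {m ℓ : L} {a : Tm L} {S : Finset ℕ} :
      ℓ ≠ ⊤ →
      HeapStep (H₁ ++ [(x, m ⊓ ℓ, a)] ++ H₂) (.var x) ℓ S (H₁ ++ [(x, m, a)] ++ H₂) a
  | discard {H H' : Heap L} {a a' : Tm L} {ℓ ℓ' : L} {S : Finset ℕ} :
      HeapStep H a ℓ S H' a' → ℓ ≤ ℓ' → HeapStep H a ℓ' S H' a'
  | appCong {H H' : Heap L} {b b' : Tm L} {ℓ : L} {S : Finset ℕ} (a : Tm L) (m : L) :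
      HeapStep H b ℓ (S ∪ fv a) H' b' →
      HeapStep H (.app b a m) ℓ S H' (.app b' a m)
  | letUnitCong {H H' : Heap L} {a a' : Tm L} {ℓ : L} {S : Finset ℕ} (b : Tm L) :
      HeapStep H a ℓ (S ∪ fv b) H' a' →
      HeapStep H (.letUnit a b) ℓ S H' (.letUnit a' b)
  | letPairCong {H H' : Heap L} {a a' : Tm L} {ℓ : L} {S : Finset ℕ}
      (x : ℕ) (m : L) (y : ℕ) (b : Tm L) :
      HeapStep H a ℓ (S ∪ fv b) H' a' →
      HeapStep H (.letPair x m y a b) ℓ S H' (.letPair x m y a' b)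
  | caseCong {H H' : Heap L} {a a' : Tm L} {ℓ : L} {S : Finset ℕ}
      (x₁ : ℕ) (b₁ : Tm L) (x₂ : ℕ) (b₂ : Tm L) :
      HeapStep H a ℓ (S ∪ fv b₁ ∪ fv b₂) H' a' →
      HeapStep H (.case a x₁ b₁ x₂ b₂) ℓ S H' (.case a' x₁ b₁ x₂ b₂)
  | appBeta {H : Heap L} {S : Finset ℕ} (m : L) (x : ℕ) (A : Ty L) (b a : Tm L)
      (ℓ : L) {x' : ℕ} :
      x' ∉ S → x' ∉ heapDom H →
      HeapStep H (.app (.lam m x A b) a m) ℓ S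
        (H ++ [(x', ℓ ⊔ m, a)]) (subst x (.var x') b)
  | letUnitBeta {H : Heap L} {S : Finset ℕ} (b : Tm L) (ℓ : L) :
      HeapStep H (.letUnit .unit b) ℓ S H b
  | letPairBeta {H : Heap L} {S : Finset ℕ} (x : ℕ) (m : L) (y : ℕ)
      (a₁ a₂ b : Tm L) (ℓ : L) {x' y' : ℕ} :
      x' ∉ S → x' ∉ heapDom H → y' ∉ S → y' ∉ heapDom H → x' ≠ y' →
      HeapStep H (.letPair x m y (.pair a₁ m a₂) b) ℓ S
        (H ++ [(x', ℓ ⊔ m, a₁), (y', ℓ, a₂)])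
        (subst y (.var y') (subst x (.var x') b))
  | caseBeta1 {H : Heap L} {S : Finset ℕ} (a₁ : Tm L) (x₁ : ℕ) (b₁ : Tm L)
      (x₂ : ℕ) (b₂ : Tm L) (ℓ : L) {x' : ℕ} :
      x' ∉ S → x' ∉ heapDom H →
      HeapStep H (.case (.inj1 a₁) x₁ b₁ x₂ b₂) ℓ S
        (H ++ [(x', ℓ, a₁)]) (subst x₁ (.var x') b₁)
  | caseBeta2 {H : Heap L} {S : Finset ℕ} (a₂ : Tm L) (x₁ : ℕ) (b₁ : Tm L)
      (x₂ : ℕ) (b₂ : Tm L) (ℓ : L) {x' : ℕ} :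
      x' ∉ S → x' ∉ heapDom H →
      HeapStep H (.case (.inj2 a₂) x₁ b₁ x₂ b₂) ℓ S
        (H ++ [(x', ℓ, a₂)]) (subst x₂ (.var x') b₂)

/-- The compatibility judgment `H ⊨ Γ` between heaps and contexts. -/
inductive Compat : Heap L → Ctx L → Prop where
  | nil : Compat [] []
  | cons {H : Heap L} {Γ Γ₀ : Ctx L} {x : ℕ} {ℓ : L} {a : Tm L} {A : Ty L} :
      floor Γ₀ = floor Γ →
      Typing Γ₀ a ℓ A →
      Compat H (ctxMeet Γ Γ₀) →
      Compat (H ++ [(x, ℓ, a)]) (Γ ++ [(x, ℓ, A)])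

/-- `n` successive heap reduction steps at label `ℓ`, where at each step the
support set is the domain of the current heap together with the free
variables of the current term. -/
inductive HeapSteps : Heap L → Tm L → L → ℕ → Heap L → Tm L → Prop where
  | refl (H : Heap L) (a : Tm L) (ℓ : L) : HeapSteps H a ℓ 0 H a
  | step {H H' H'' : Heap L} {a a' a'' : Tm L} {ℓ : L} {n : ℕ} :
      HeapStep H a ℓ (heapDom H ∪ fv a) H' a' →
      HeapSteps H' a' ℓ n H'' a'' →
      HeapSteps H a ℓ (n + 1) H'' a''

theorem floor_ctxJoin (m : L) (Γ : Ctx L) : floor (ctxJoin m Γ) = floor Γ := by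
  simp [floor, ctxJoin]

theorem ctxJoin_append (m : L) (Γ₁ Γ₂ : Ctx L) :
    ctxJoin m (Γ₁ ++ Γ₂) = ctxJoin m Γ₁ ++ ctxJoin m Γ₂ := by
  simp [ctxJoin]

theorem ctxJoin_ctxJoin (m n : L) (Γ : Ctx L) :
    ctxJoin m (ctxJoin n Γ) = ctxJoin (m ⊔ n) Γ := by
  simp [ctxJoin, List.map_map, Function.comp, sup_assoc]

theorem ctxLe_joinMeet (m : L) : ∀ Γ₁ Γ₂ : Ctx L,
    ctxLe (ctxJoin m (ctxMeet Γ₁ Γ₂)) (ctxMeet (ctxJoin m Γ₁) (ctxJoin m Γ₂))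
  | [], _ => by simp [ctxJoin, ctxMeet, ctxLe]
  | _ :: _, [] => by simp [ctxJoin, ctxMeet, ctxLe]
  | e₁ :: Γ₁, e₂ :: Γ₂ => by
      refine List.Forall₂.cons ⟨rfl, rfl, ?_⟩ (ctxLe_joinMeet m Γ₁ Γ₂)
      exact le_inf (sup_le_sup_left inf_le_left m) (sup_le_sup_left inf_le_right m)

theorem ctxLe_join_mono (m : L) {Γ Γ' : Ctx L} (h : ctxLe Γ Γ') :
    ctxLe (ctxJoin m Γ) (ctxJoin m Γ') := by
  induction h with
  | nil => exact List.Forall₂.nil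
  | cons h _ ih =>
      exact List.Forall₂.cons ⟨h.1, h.2.1, sup_le_sup_left h.2.2 m⟩ ih

end LDCL

/-- **Multiplication (Lemma 3.6 of LDC).** In LDC(𝓛) for an arbitrary lattice
`𝓛` with `⊤` and `⊥`: if `Γ ⊢ a :^ℓ A`, then for every `m₀ ∈ L`,
`m₀ ⊔ Γ ⊢ a :^{m₀ ⊔ ℓ} A`. -/
theorem LDCL.multiplication {L : Type} [Lattice L] [BoundedOrder L]
    {Γ : LDCL.Ctx L} {a : LDCL.Tm L} {ℓ : L} {A : LDCL.Ty L}
    (h : LDCL.Typing Γ a ℓ A) (m₀ : L) :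
    LDCL.Typing (LDCL.ctxJoin m₀ Γ) a (m₀ ⊔ ℓ) A := by
  induction h with
  | var Γ₁ Γ₂ x ℓ A =>
      rw [ctxJoin_append, ctxJoin_append, ctxJoin_ctxJoin, ctxJoin_ctxJoin,
        sup_top_eq]
      simpa [ctxJoin] using Typing.var Γ₁ Γ₂ x (m₀ ⊔ ℓ) A
  | lam m x A _ ih =>
      refine Typing.lam m x A ?_
      have := ih
      rw [ctxJoin_append] at this
      simpa [ctxJoin, sup_assoc] using this
  | app _ _ hf ihb iha =>
      refine Typing.subL ?_ (ctxLe_joinMeet m₀ _ _)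
      refine Typing.app (ihb) ?_ (by rw [floor_ctxJoin, floor_ctxJoin, hf])
      simpa [sup_assoc] using iha
  | unit Γ ℓ =>
      rw [ctxJoin_ctxJoin, sup_top_eq]
      exact Typing.unit Γ (m₀ ⊔ ℓ)
  | letUnit _ _ hf iha ihb =>
      refine Typing.subL ?_ (ctxLe_joinMeet m₀ _ _)
      exact Typing.letUnit (iha) (ihb) (by rw [floor_ctxJoin, floor_ctxJoin, hf])
  | pair _ _ hf ih1 ih2 =>
      refine Typing.subL ?_ (ctxLe_joinMeet m₀ _ _)
      refine Typing.pair ?_ (ih2) (by rw [floor_ctxJoin, floor_ctxJoin, hf])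
      simpa [sup_assoc] using ih1
  | letPair _ _ hf iha ihb =>
      refine Typing.subL ?_ (ctxLe_joinMeet m₀ _ _)
      refine Typing.letPair (iha) ?_ (by rw [floor_ctxJoin, floor_ctxJoin, hf])
      have := ihb
      rw [ctxJoin_append] at this
      simpa [ctxJoin, sup_assoc] using this
  | inj1 A₂ _ ih => exact Typing.inj1 A₂ (ih)
  | inj2 A₁ _ ih => exact Typing.inj2 A₁ (ih)
  | case _ _ _ hf iha ih1 ih2 =>
      refine Typing.subL ?_ (ctxLe_joinMeet m₀ _ _)
      refine Typing.case (iha) ?_ ?_ (by rw [floor_ctxJoin, floor_ctxJoin, hf])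
      · have := ih1; rw [ctxJoin_append] at this; simpa [ctxJoin] using this
      · have := ih2; rw [ctxJoin_append] at this; simpa [ctxJoin] using this
  | subL _ hle ih => exact Typing.subL (ih) (ctxLe_join_mono m₀ hle)
  | subR _ hle ih => exact Typing.subR (ih) (sup_le_sup_left hle m₀)
end

section
/- (Progress, Theorem 3.4 of LDC) In LDC(𝓛) for an arbitrary lattice 𝓛 with ⊤ and ⊥: if ∅ ⊢ a :^ℓ A (typing in the empty context), then either a is a value or there exists a' such that ⊢ a ⇝ a'. -/
namespace LDCL

variable {L : Type} [Lattice L] [BoundedOrder L]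

lemma meet_nil {Γ₁ Γ₂ : Ctx L} (h : ctxMeet Γ₁ Γ₂ = []) (hf : floor Γ₁ = floor Γ₂) :
    Γ₁ = [] ∧ Γ₂ = [] := by
  have hl : Γ₁.length = Γ₂.length := by
    have := congrArg List.length hf
    simpa [floor] using this
  cases Γ₁ with
  | nil =>
    cases Γ₂ with
    | nil => exact ⟨rfl, rfl⟩
    | cons b t2 => simp at hl
  | cons a t =>
    cases Γ₂ with
    | nil => simp at hl
    | cons b t2 => simp [ctxMeet] at h

lemma ctxLe_nil {Γ' : Ctx L} (h : ctxLe ([] : Ctx L) Γ') : Γ' = [] := by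
  cases h; rfl

lemma canon_arr {Γ : Ctx L} {v : Tm L} {ℓ : L} {T : Ty L}
    (h : Typing Γ v ℓ T) :
    ∀ {m : L} {A B : Ty L}, Γ = [] → T = Ty.arr m A B → IsValue v →
      ∃ x b, v = Tm.lam m x A b := by
  induction h with
  | lam m x A _ => intro m' A' B' _ hT _; cases hT; exact ⟨x, _, rfl⟩
  | subL h hle ih =>
    intro m A B hΓ hT hv; subst hΓ; exact ih (ctxLe_nil hle) hT hv
  | subR h _ ih => exact ih
  | _ =>
    intro m A B hΓ hT hv
    first
    | simp at hT
    | simp [IsValue] at hv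

lemma canon_unit {Γ : Ctx L} {v : Tm L} {ℓ : L} {T : Ty L}
    (h : Typing Γ v ℓ T) :
    T = Ty.unit → IsValue v → v = Tm.unit := by
  induction h with
  | unit => intro _ _; rfl
  | subL h hle ih => exact ih
  | subR h _ ih => exact ih
  | _ =>
    intro hT hv
    first
    | simp at hT
    | simp [IsValue] at hv

lemma canon_prod {Γ : Ctx L} {v : Tm L} {ℓ : L} {T : Ty L}
    (h : Typing Γ v ℓ T) :
    ∀ {m : L} {A₁ A₂ : Ty L}, T = Ty.prod m A₁ A₂ → IsValue v →
      ∃ a₁ a₂, v = Tm.pair a₁ m a₂ := by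
  induction h with
  | pair _ _ _ => intro m A₁ A₂ hT _; cases hT; exact ⟨_, _, rfl⟩
  | subL h hle ih => exact ih
  | subR h _ ih => exact ih
  | _ =>
    intro m A₁ A₂ hT hv
    first
    | simp at hT
    | simp [IsValue] at hv

lemma canon_sum {Γ : Ctx L} {v : Tm L} {ℓ : L} {T : Ty L}
    (h : Typing Γ v ℓ T) :
    ∀ {A₁ A₂ : Ty L}, T = Ty.sum A₁ A₂ → IsValue v →
      (∃ a, v = Tm.inj1 a) ∨ (∃ a, v = Tm.inj2 a) := by
  induction h with
  | inj1 _ _ => intro A₁ A₂ _ _; exact Or.inl ⟨_, rfl⟩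
  | inj2 _ _ => intro A₁ A₂ _ _; exact Or.inr ⟨_, rfl⟩
  | subL h hle ih => exact ih
  | subR h _ ih => exact ih
  | _ =>
    intro A₁ A₂ hT hv
    first
    | simp at hT
    | simp [IsValue] at hv

end LDCL

/-- **Progress (Theorem 3.4 of LDC).** In LDC(𝓛) for an arbitrary lattice `𝓛`
with `⊤` and `⊥`: if `∅ ⊢ a :^ℓ A` (typing in the empty context), then either
`a` is a value or there exists `a'` such that `⊢ a ⇝ a'`. -/
theorem LDCL.progress {L : Type} [Lattice L] [BoundedOrder L]
    {a : LDCL.Tm L} {ℓ : L} {A : LDCL.Ty L}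
    (h : LDCL.Typing [] a ℓ A) :
    LDCL.IsValue a ∨ ∃ a' : LDCL.Tm L, LDCL.Step a a' := by
  suffices h' : ∀ {Γ : LDCL.Ctx L} {a : LDCL.Tm L} {ℓ : L} {A : LDCL.Ty L},
      LDCL.Typing Γ a ℓ A → Γ = [] →
      LDCL.IsValue a ∨ ∃ a' : LDCL.Tm L, LDCL.Step a a' from h' h rfl
  clear h a ℓ A
  intro Γ a ℓ A h
  induction h with
  | var Γ₁ Γ₂ x ℓ A => intro hΓ; simp at hΓ
  | lam m x A _ _ => intro _; exact Or.inl trivial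
  | app hb ha hf ihb iha =>
    intro hΓ
    obtain ⟨h1, h2⟩ := LDCL.meet_nil hΓ hf
    rcases ihb h1 with hv | ⟨b', hs⟩
    · obtain ⟨x, b, rfl⟩ := LDCL.canon_arr hb h1 rfl hv
      exact Or.inr ⟨_, LDCL.Step.appBeta _ _ _ _ _⟩
    · exact Or.inr ⟨_, LDCL.Step.appCong _ _ hs⟩
  | unit Γ ℓ => intro _; exact Or.inl trivial
  | letUnit ha hb hf iha ihb =>
    intro hΓ
    obtain ⟨h1, h2⟩ := LDCL.meet_nil hΓ hf
    rcases iha h1 with hv | ⟨a', hs⟩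
    · obtain rfl := LDCL.canon_unit ha rfl hv
      exact Or.inr ⟨_, LDCL.Step.letUnitBeta _⟩
    · exact Or.inr ⟨_, LDCL.Step.letUnitCong _ hs⟩
  | pair _ _ _ _ _ => intro _; exact Or.inl trivial
  | letPair ha hb hf iha ihb =>
    intro hΓ
    obtain ⟨h1, h2⟩ := LDCL.meet_nil hΓ hf
    rcases iha h1 with hv | ⟨a', hs⟩
    · obtain ⟨a₁, a₂, rfl⟩ := LDCL.canon_prod ha rfl hv
      exact Or.inr ⟨_, LDCL.Step.letPairBeta _ _ _ _ _ _⟩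
    · exact Or.inr ⟨_, LDCL.Step.letPairCong _ _ _ _ hs⟩
  | inj1 _ _ _ => intro _; exact Or.inl trivial
  | inj2 _ _ _ => intro _; exact Or.inl trivial
  | case ha hb₁ hb₂ hf iha ihb₁ ihb₂ =>
    intro hΓ
    obtain ⟨h1, h2⟩ := LDCL.meet_nil hΓ hf
    rcases iha h1 with hv | ⟨a', hs⟩
    · rcases LDCL.canon_sum ha rfl hv with ⟨a₁, rfl⟩ | ⟨a₂, rfl⟩
      · exact Or.inr ⟨_, LDCL.Step.caseBeta1 _ _ _ _ _⟩
      · exact Or.inr ⟨_, LDCL.Step.caseBeta2 _ _ _ _ _⟩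
    · exact Or.inr ⟨_, LDCL.Step.caseCong _ _ _ _ hs⟩
  | subL h hle ih => intro hΓ; subst hΓ; exact ih (LDCL.ctxLe_nil hle)
  | subR h _ ih => exact ih
end

section
/- (Unchanged, Lemma 5.1 of LDC) In the heap semantics of LDC(N≥): if [H₁, x ↦^r a, H₂] c ⟹^q_S [H₁', x ↦^{r'} a, H₂'] c' where |H₁| = |H₁'|, and there is no q₀ ∈ ℕ with r = q + q₀, then r' = r. -/
/-!
The simply-typed calculus LDC(N≥): graded by the preordered semiring of natural
numbers with the descending order, i.e. the preorder `q <: q'` holds iff `q' ≤ q`.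
-/

namespace LDC

private lemma get_mid {α : Type*} (A B : List α) (e : α) :
    (A ++ [e] ++ B)[A.length]? = some e := by
  rw [List.append_assoc, List.getElem?_append_right (le_refl _)]
  simp

private lemma get_ne {α : Type*} (A B : List α) (e f : α) (i : ℕ) (hi : i ≠ A.length) :
    (A ++ [e] ++ B)[i]? = (A ++ [f] ++ B)[i]? := by
  rcases Nat.lt_or_ge i A.length with h | h
  · rw [List.append_assoc, List.append_assoc, List.getElem?_append_left h,
      List.getElem?_append_left h]
  · rw [List.append_assoc, List.append_assoc, List.getElem?_append_right h,
      List.getElem?_append_right h,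
      List.getElem?_append_right (l₁ := [e]) (by simp; omega),
      List.getElem?_append_right (l₁ := [f]) (by simp; omega)]
    simp

private lemma mid_of_append {α : Type*} {H L G₁ G₂ G₁' G₂' : List α} {e e' : α}
    (h1 : H = G₁ ++ [e] ++ G₂) (h2 : H ++ L = G₁' ++ [e'] ++ G₂')
    (hlen : G₁.length = G₁'.length) : e' = e := by
  have hlt : G₁.length < H.length := by subst h1; simp
  have g : (H ++ L)[G₁.length]? = some e := by
    rw [List.getElem?_append_left hlt, h1, get_mid]
  rw [h2, hlen, get_mid] at g
  exact Option.some.inj g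

theorem unchanged_aux {H H' : Heap} {c c' : Tm} {q : ℕ} {S : Finset ℕ}
    (h : HeapStep H c q S H' c') :
    ∀ (G₁ G₂ G₁' G₂' : Heap) (x r r' : ℕ) (a : Tm),
      H = G₁ ++ [(x, r, a)] ++ G₂ → H' = G₁' ++ [(x, r', a)] ++ G₂' →
      G₁.length = G₁'.length → r < q → r' = r := by
  induction h with
  | @var Hv₁ Hv₂ xv rv qv av Sv hq =>
    intro G₁ G₂ G₁' G₂' x r r' a h1 h2 hlen hr
    by_cases hi : G₁.length = Hv₁.length
    · have e1 := get_mid Hv₁ Hv₂ (xv, rv + qv, av)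
      rw [h1, ← hi, get_mid] at e1
      have := Option.some.inj e1
      have hr' : r = rv + qv := by
        simpa using congrArg (fun p => p.2.1) this
      omega
    · have e := get_ne Hv₁ Hv₂ (xv, rv + qv, av) (xv, rv, av) G₁.length hi
      rw [h1, get_mid, h2, hlen, get_mid] at e
      have := Option.some.inj e
      simpa using (congrArg (fun p => p.2.1) this).symm
  | @discard Hd Hd' ad ad' qd qd' Sd hstep hle ih =>
    intro G₁ G₂ G₁' G₂' x r r' a h1 h2 hlen hr
    exact ih G₁ G₂ G₁' G₂' x r r' a h1 h2 hlen (lt_of_lt_of_le hr hle)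
  | appCong _ _ _ ih =>
    intro G₁ G₂ G₁' G₂' x r r' a h1 h2 hlen hr
    exact ih G₁ G₂ G₁' G₂' x r r' a h1 h2 hlen hr
  | letUnitCong _ _ _ ih =>
    intro G₁ G₂ G₁' G₂' x r r' a h1 h2 hlen hr
    exact ih G₁ G₂ G₁' G₂' x r r' a h1 h2 hlen hr
  | letPairCong _ _ _ _ _ _ ih =>
    intro G₁ G₂ G₁' G₂' x r r' a h1 h2 hlen hr
    exact ih G₁ G₂ G₁' G₂' x r r' a h1 h2 hlen hr
  | caseCong _ _ _ _ _ _ ih =>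
    intro G₁ G₂ G₁' G₂' x r r' a h1 h2 hlen hr
    exact ih G₁ G₂ G₁' G₂' x r r' a h1 h2 hlen hr
  | appBeta =>
    intro G₁ G₂ G₁' G₂' x r r' a h1 h2 hlen hr
    simpa using congrArg (fun p => p.2.1) (mid_of_append h1 h2 hlen)
  | letUnitBeta =>
    intro G₁ G₂ G₁' G₂' x r r' a h1 h2 hlen hr
    simpa using congrArg (fun p => p.2.1)
      (mid_of_append h1 (by rw [List.append_nil]; exact h2) hlen)
  | letPairBeta =>
    intro G₁ G₂ G₁' G₂' x r r' a h1 h2 hlen hr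
    simpa using congrArg (fun p => p.2.1) (mid_of_append h1 h2 hlen)
  | caseBeta1 =>
    intro G₁ G₂ G₁' G₂' x r r' a h1 h2 hlen hr
    simpa using congrArg (fun p => p.2.1) (mid_of_append h1 h2 hlen)
  | caseBeta2 =>
    intro G₁ G₂ G₁' G₂' x r r' a h1 h2 hlen hr
    simpa using congrArg (fun p => p.2.1) (mid_of_append h1 h2 hlen)

end LDC

/-- **Unchanged (Lemma 5.1 of LDC).** In the heap semantics of LDC(N≥): if
`[H₁, x ↦^r a, H₂] c ⟹^q_S [H₁', x ↦^{r'} a, H₂'] c'` where `|H₁| = |H₁'|`,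
and there is no `q₀ ∈ ℕ` with `r = q + q₀`, then `r' = r`. -/
theorem LDC.unchanged {H₁ H₂ H₁' H₂' : LDC.Heap} {x r r' q : ℕ}
    {a c c' : LDC.Tm} {S : Finset ℕ}
    (h : LDC.HeapStep (H₁ ++ [(x, r, a)] ++ H₂) c q S
          (H₁' ++ [(x, r', a)] ++ H₂') c')
    (hlen : H₁.length = H₁'.length)
    (hr : ¬ ∃ q₀ : ℕ, r = q + q₀) :
    r' = r := by
  have hlt : r < q := by
    by_contra hc
    exact hr ⟨r - q, by omega⟩
  exact LDC.unchanged_aux h _ _ _ _ _ _ _ _ rfl rfl hlen hlt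
end
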